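/- arXiv:1704.06328 — 3 statements merged into one kernel-verified Lean document; each statement's English description precedes it below -/
import Mathlib

section
/- Let η_n, η : [0,1] → ℝ be continuously differentiable functions such that η_n → η and η_n′ → η′ uniformly on [0,1]. For a C¹ function ζ let φ_ζ(x) = (∫₀ˣ exp(∫₀ˢ ζ(t) dt) ds)/(∫₀¹ exp(∫₀ˢ ζ(t) dt) ds) be the associated orientation-preserving C³ diffeomorphism of [0,1]. Then φ_{η_n} converges to φ_η in the C³ sense: φ_{η_n} → φ_η, φ_{η_n}′ → φ_η′, φ_{η_n}″ → φ_η″ and φ_{η_n}‴ → φ_η‴, all uniformly on [0,1]. -/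
open Set

/-- The orientation-preserving diffeomorphism of `[0,1]` associated to a nonlinearity `ζ`. -/
noncomputable def phiOf (ζ : ℝ → ℝ) : ℝ → ℝ := fun x =>
  (∫ s in (0:ℝ)..x, Real.exp (∫ t in (0:ℝ)..s, ζ t)) /
  (∫ s in (0:ℝ)..(1:ℝ), Real.exp (∫ t in (0:ℝ)..s, ζ t))

/-!
Write `φ_ζ = Φ_ζ / c_ζ` with density `D_ζ x = exp (∫₀ˣ ζ)`, primitive `Φ_ζ x = ∫₀ˣ D_ζ` and
normalizer `c_ζ = Φ_ζ 1 > 0`. Then `φ_ζ' = D_ζ / c_ζ`, `φ_ζ'' = ζ D_ζ / c_ζ` and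
`φ_ζ''' = (ζ' + ζ²) D_ζ / c_ζ`. Uniform convergence on `[0,1]` passes through integration from `0`,
through composition with `exp` (the limits are bounded) and through products and quotients with
continuous limits on a compact set, so `D_{η_n} → D_η`, `Φ_{η_n} → Φ_η`, `c_{η_n} → c_η` and
each of the four expressions converges.
-/

open Filter MeasureTheory intervalIntegral Topology

section UniformConvergence

variable {ι α : Type*} {p : Filter ι} {s : Set α}

theorem TendstoUniformlyOn.comp_continuous_of_isBounded {β γ : Type*} [PseudoMetricSpace β]
    [ProperSpace β] [UniformSpace γ] {F : ι → α → β} {f : α → β} {g : β → γ}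
    (h : TendstoUniformlyOn F f p s) (hf : Bornology.IsBounded (f '' s)) (hg : Continuous g) :
    TendstoUniformlyOn (fun i x => g (F i x)) (fun x => g (f x)) p s := by
  have ht : IsCompact (Metric.cthickening 1 (f '' s)) :=
    Metric.isCompact_of_isClosed_isBounded Metric.isClosed_cthickening hf.cthickening
  refine (ht.uniformContinuousOn_of_continuous hg.continuousOn).comp_tendstoUniformlyOn_eventually
    ?_ (fun x hx => Metric.self_subset_cthickening _ (mem_image_of_mem f hx)) h
  filter_upwards [Metric.tendstoUniformlyOn_iff.1 h 1 one_pos] with i hi x hx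
  exact Metric.mem_cthickening_of_dist_le _ _ _ _ (mem_image_of_mem f hx)
    (dist_comm (f x) (F i x) ▸ (hi x hx).le)

variable [TopologicalSpace α]

theorem TendstoUniformlyOn.mul_of_isCompact {R : Type*} [SeminormedRing R] {F G : ι → α → R}
    {f g : α → R} (hs : IsCompact s) (hF : TendstoUniformlyOn F f p s)
    (hG : TendstoUniformlyOn G g p s) (hf : ContinuousOn f s) (hg : ContinuousOn g s) :
    TendstoUniformlyOn (fun i x => F i x * G i x) (fun x => f x * g x) p s := by
  rw [← tendstoLocallyUniformlyOn_iff_tendstoUniformlyOn_of_compact hs] at *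
  exact hF.fun_mul₀ hG hf hg

theorem TendstoUniformlyOn.div_of_isCompact {𝕜 : Type*} [NormedDivisionRing 𝕜] {F G : ι → α → 𝕜}
    {f g : α → 𝕜} (hs : IsCompact s) (hF : TendstoUniformlyOn F f p s)
    (hG : TendstoUniformlyOn G g p s) (hf : ContinuousOn f s) (hg : ContinuousOn g s)
    (hg₀ : ∀ x ∈ s, g x ≠ 0) :
    TendstoUniformlyOn (fun i x => F i x / G i x) (fun x => f x / g x) p s := by
  rw [← tendstoLocallyUniformlyOn_iff_tendstoUniformlyOn_of_compact hs] at *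
  exact hF.fun_div₀ hG hf hg hg₀

end UniformConvergence

theorem TendstoUniformlyOn.intervalIntegral_Icc {ι E : Type*} [NormedAddCommGroup E]
    [NormedSpace ℝ E] {p : Filter ι} {F : ι → ℝ → E} {f : ℝ → E} {a b : ℝ}
    (h : TendstoUniformlyOn F f p (Icc a b)) (hF : ∀ i, IntervalIntegrable (F i) volume a b)
    (hf : IntervalIntegrable f volume a b) :
    TendstoUniformlyOn (fun i x => ∫ t in a..x, F i t) (fun x => ∫ t in a..x, f t) p (Icc a b) := by
  rw [Metric.tendstoUniformlyOn_iff] at h ⊢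
  intro ε hε
  set δ := ε / (|b - a| + 1)
  filter_upwards [h δ (by positivity)] with i hi x hx
  have hsub : uIcc a x ⊆ uIcc a b := uIcc_subset_uIcc_left (Icc_subset_uIcc hx)
  have hbound : ∀ t ∈ uIoc a x, ‖f t - F i t‖ ≤ δ := fun t ht => by
    rw [uIoc_of_le hx.1] at ht
    rw [← dist_eq_norm]
    exact (hi t ⟨ht.1.le, ht.2.trans hx.2⟩).le
  rw [dist_eq_norm, ← integral_sub (hf.mono_set hsub) ((hF i).mono_set hsub)]
  calc ‖∫ t in a..x, (f t - F i t)‖ ≤ δ * |x - a| := norm_integral_le_of_norm_le_const hbound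
    _ ≤ δ * |b - a| := by gcongr <;> linarith [hx.1, hx.2]
    _ < ε := by
        rw [div_mul_eq_mul_div, div_lt_iff₀ (by positivity)]
        linarith

noncomputable def phiDensity (ζ : ℝ → ℝ) (x : ℝ) : ℝ := Real.exp (∫ t in (0:ℝ)..x, ζ t)

noncomputable def phiNormalizer (ζ : ℝ → ℝ) : ℝ := ∫ s in (0:ℝ)..1, phiDensity ζ s

theorem phiOf_eq (ζ : ℝ → ℝ) :
    phiOf ζ = fun x => (∫ s in (0:ℝ)..x, phiDensity ζ s) / phiNormalizer ζ :=
  rfl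

section Derivatives

variable {ζ : ℝ → ℝ}

theorem continuous_phiDensity (hζ : Continuous ζ) : Continuous (phiDensity ζ) :=
  (continuous_primitive hζ.intervalIntegrable 0).rexp

theorem hasDerivAt_phiDensity (hζ : Continuous ζ) (x : ℝ) :
    HasDerivAt (phiDensity ζ) (ζ x * phiDensity ζ x) x := by
  exact (hζ.integral_hasStrictDerivAt 0 x).hasDerivAt.exp.congr_deriv (mul_comm _ _)

theorem phiNormalizer_pos (hζ : Continuous ζ) : 0 < phiNormalizer ζ :=
  intervalIntegral_pos_of_pos_on ((continuous_phiDensity hζ).intervalIntegrable _ _)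
    (fun _ _ => Real.exp_pos _) one_pos

theorem deriv_phiOf (hζ : Continuous ζ) :
    deriv (phiOf ζ) = fun x => phiDensity ζ x / phiNormalizer ζ := by
  funext x
  exact (((continuous_phiDensity hζ).integral_hasStrictDerivAt 0 x).hasDerivAt.div_const _).deriv

theorem iteratedDeriv_two_phiOf (hζ : Continuous ζ) :
    iteratedDeriv 2 (phiOf ζ) = fun x => ζ x * phiDensity ζ x / phiNormalizer ζ := by
  rw [iteratedDeriv_succ, iteratedDeriv_one, deriv_phiOf hζ]
  funext x
  exact ((hasDerivAt_phiDensity hζ x).div_const _).deriv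

theorem iteratedDeriv_three_phiOf (hζ : ContDiff ℝ 1 ζ) :
    iteratedDeriv 3 (phiOf ζ) =
      fun x => (deriv ζ x + ζ x ^ 2) * phiDensity ζ x / phiNormalizer ζ := by
  rw [iteratedDeriv_succ, iteratedDeriv_two_phiOf hζ.continuous]
  funext x
  have hζx : HasDerivAt ζ (deriv ζ x) x := (hζ.differentiable one_ne_zero x).hasDerivAt
  rw [((hζx.fun_mul (hasDerivAt_phiDensity hζ.continuous x)).div_const _).deriv]
  ring

end Derivatives

section Convergence

variable {η : ℕ → ℝ → ℝ} {ηlim : ℝ → ℝ}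

theorem tendstoUniformlyOn_phiDensity (hη : ∀ n, Continuous (η n)) (hηlim : Continuous ηlim)
    (hconv : TendstoUniformlyOn η ηlim atTop (Icc 0 1)) :
    TendstoUniformlyOn (fun n => phiDensity (η n)) (phiDensity ηlim) atTop (Icc 0 1) :=
  (hconv.intervalIntegral_Icc (fun n => (hη n).intervalIntegrable _ _)
    (hηlim.intervalIntegrable _ _)).comp_continuous_of_isBounded
    (isCompact_Icc.image (continuous_primitive hηlim.intervalIntegrable 0)).isBounded
    Real.continuous_exp

theorem tendstoUniformlyOn_primitive_phiDensity (hη : ∀ n, Continuous (η n))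
    (hηlim : Continuous ηlim) (hconv : TendstoUniformlyOn η ηlim atTop (Icc 0 1)) :
    TendstoUniformlyOn (fun n x => ∫ s in (0:ℝ)..x, phiDensity (η n) s)
      (fun x => ∫ s in (0:ℝ)..x, phiDensity ηlim s) atTop (Icc 0 1) :=
  (tendstoUniformlyOn_phiDensity hη hηlim hconv).intervalIntegral_Icc
    (fun n => (continuous_phiDensity (hη n)).intervalIntegrable _ _)
    ((continuous_phiDensity hηlim).intervalIntegrable _ _)

theorem tendsto_phiNormalizer (hη : ∀ n, Continuous (η n)) (hηlim : Continuous ηlim)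
    (hconv : TendstoUniformlyOn η ηlim atTop (Icc 0 1)) :
    Tendsto (fun n => phiNormalizer (η n)) atTop (𝓝 (phiNormalizer ηlim)) :=
  (tendstoUniformlyOn_primitive_phiDensity hη hηlim hconv).tendsto_at ⟨zero_le_one, le_rfl⟩

theorem TendstoUniformlyOn.div_phiNormalizer {A : ℕ → ℝ → ℝ} {a : ℝ → ℝ}
    (hA : TendstoUniformlyOn A a atTop (Icc 0 1)) (ha : ContinuousOn a (Icc 0 1))
    (hη : ∀ n, Continuous (η n)) (hηlim : Continuous ηlim)
    (hconv : TendstoUniformlyOn η ηlim atTop (Icc 0 1)) :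
    TendstoUniformlyOn (fun n x => A n x / phiNormalizer (η n))
      (fun x => a x / phiNormalizer ηlim) atTop (Icc 0 1) :=
  hA.div_of_isCompact isCompact_Icc
    ((tendsto_phiNormalizer hη hηlim hconv).tendstoUniformlyOn_const _) ha continuousOn_const
    (fun _ _ => (phiNormalizer_pos hηlim).ne')

end Convergence

theorem stmt2 (η : ℕ → ℝ → ℝ) (ηlim : ℝ → ℝ)
    (hη : ∀ n, ContDiff ℝ 1 (η n)) (hηlim : ContDiff ℝ 1 ηlim)
    (hconv : TendstoUniformlyOn (fun n => η n) ηlim Filter.atTop (Icc 0 1))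
    (hconv' : TendstoUniformlyOn (fun n => deriv (η n)) (deriv ηlim) Filter.atTop (Icc 0 1)) :
    ∀ k : ℕ, k ≤ 3 →
      TendstoUniformlyOn (fun n => iteratedDeriv k (phiOf (η n)))
        (iteratedDeriv k (phiOf ηlim)) Filter.atTop (Icc 0 1) := by
  have hηc n : Continuous (η n) := (hη n).continuous
  have hlim : Continuous ηlim := hηlim.continuous
  have hc : ContinuousOn ηlim (Icc 0 1) := hlim.continuousOn
  have hD := tendstoUniformlyOn_phiDensity hηc hlim hconv
  have hDc : ContinuousOn (phiDensity ηlim) (Icc 0 1) :=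
    (continuous_phiDensity hlim).continuousOn
  intro k hk
  interval_cases k
  · simpa only [iteratedDeriv_zero, phiOf_eq] using
      (tendstoUniformlyOn_primitive_phiDensity hηc hlim hconv).div_phiNormalizer
        (continuous_primitive (continuous_phiDensity hlim).intervalIntegrable 0).continuousOn
        hηc hlim hconv
  · simpa only [iteratedDeriv_one, deriv_phiOf, hηc, hlim] using
      hD.div_phiNormalizer hDc hηc hlim hconv
  · simpa only [iteratedDeriv_two_phiOf, hηc, hlim] using
      (hconv.mul_of_isCompact isCompact_Icc hD hc hDc).div_phiNormalizer (hc.mul hDc)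
        hηc hlim hconv
  · have hpoly : TendstoUniformlyOn (fun n x => deriv (η n) x + η n x ^ 2)
        (fun x => deriv ηlim x + ηlim x ^ 2) atTop (Icc 0 1) := by
      simp only [sq]
      exact hconv'.add (hconv.mul_of_isCompact isCompact_Icc hconv hc hc)
    have hpolyc : ContinuousOn (fun x => deriv ηlim x + ηlim x ^ 2) (Icc 0 1) :=
      ((hηlim.continuous_deriv le_rfl).add (hlim.pow 2)).continuousOn
    simpa only [iteratedDeriv_three_phiOf, hη, hηlim] using
      (hpoly.mul_of_isCompact isCompact_Icc hD hpolyc hDc).div_phiNormalizer (hpolyc.mul hDc)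
        hηc hlim hconv
end

section
/- For every real ℓ with 0 < ℓ < 2, the number 1 is not an eigenvalue of L (equivalently, I − L is invertible), and hence for every vector w* ∈ ℝ⁴ there exists a unique vector w_fix ∈ ℝ⁴ satisfying L·w_fix + w* = w_fix. -/
/-- The matrix `L` of the linearized renormalization recursion. -/
noncomputable def Lmat (ℓ : ℝ) : Matrix (Fin 4) (Fin 4) ℝ :=
  !![1 + 1/ℓ, 1, 0, -1;
     -(1/ℓ), -1, 0, 1;
     1, 0, -1, 0;
     1 - 1/ℓ, 0, 0, 0]

/-! Everything rests on `det (1 - L) = 2 - 4/ℓ`, which vanishes only at `ℓ = 2`.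
Once `1 - L` is a unit, `1 ∉ σ(L)`, and the fixed-point equation `L w + w* = w`, being
`(1 - L) w = w*`, has exactly one solution. -/

namespace Matrix

variable {n R : Type*} [Fintype n] [DecidableEq n] [CommRing R]

theorem mulVec_bijective_of_isUnit {A : Matrix n n R} (hA : IsUnit A) :
    Function.Bijective A.mulVec := by
  obtain ⟨u, rfl⟩ := hA
  refine Function.bijective_iff_has_inverse.mpr
    ⟨(↑u⁻¹ : Matrix n n R).mulVec, fun v => ?_, fun v => ?_⟩ <;> simp [mulVec_mulVec]

theorem mulVec_add_eq_self_iff (A : Matrix n n R) (v w : n → R) :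
    A *ᵥ v + w = v ↔ (1 - A) *ᵥ v = w := by
  rw [sub_mulVec, one_mulVec, sub_eq_iff_eq_add', eq_comm]

theorem existsUnique_mulVec_add_eq_self {A : Matrix n n R} (hA : IsUnit (1 - A)) (w : n → R) :
    ∃! v, A *ᵥ v + w = v := by
  simpa only [mulVec_add_eq_self_iff] using (mulVec_bijective_of_isUnit hA).existsUnique w

theorem one_notMem_spectrum_iff {A : Matrix n n R} :
    (1 : R) ∉ spectrum R A ↔ IsUnit (1 - A) := by
  rw [spectrum.notMem_iff, map_one]

end Matrix

theorem one_sub_Lmat (ℓ : ℝ) : 1 - Lmat ℓ =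
    !![-(1/ℓ), -1, 0, 1;
       1/ℓ, 2, 0, -1;
       -1, 0, 2, 0;
       1/ℓ - 1, 0, 0, 1] := by
  ext i j
  fin_cases i <;> fin_cases j <;> simp [Lmat] <;> ring

theorem det_one_sub_Lmat (ℓ : ℝ) : (1 - Lmat ℓ).det = 2 - 4 / ℓ := by
  rw [one_sub_Lmat]
  simp [Matrix.det_succ_row_zero, Fin.sum_univ_succ, Fin.succAbove]
  ring

theorem isUnit_one_sub_Lmat {ℓ : ℝ} (h : ℓ ≠ 2) : IsUnit (1 - Lmat ℓ) := by
  rw [Matrix.isUnit_iff_isUnit_det, det_one_sub_Lmat, isUnit_iff_ne_zero, sub_ne_zero]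
  intro h4
  have hℓ : ℓ ≠ 0 := by rintro rfl; norm_num at h4
  field_simp at h4
  exact h (by linarith)

theorem stmt8_general (ℓ : ℝ) (h2 : ℓ < 2) :
    (1 : ℝ) ∉ spectrum ℝ (Lmat ℓ) ∧
    IsUnit ((1 : Matrix (Fin 4) (Fin 4) ℝ) - Lmat ℓ) ∧
    ∀ wstar : Fin 4 → ℝ, ∃! wfix : Fin 4 → ℝ, (Lmat ℓ).mulVec wfix + wstar = wfix := by
  have hunit := isUnit_one_sub_Lmat h2.ne
  exact ⟨Matrix.one_notMem_spectrum_iff.mpr hunit, hunit,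
    Matrix.existsUnique_mulVec_add_eq_self hunit⟩

theorem stmt8 (ℓ : ℝ) (h0 : 0 < ℓ) (h2 : ℓ < 2) :
    (1 : ℝ) ∉ spectrum ℝ (Lmat ℓ) ∧
    IsUnit ((1 : Matrix (Fin 4) (Fin 4) ℝ) - Lmat ℓ) ∧
    ∀ wstar : Fin 4 → ℝ, ∃! wfix : Fin 4 → ℝ, (Lmat ℓ).mulVec wfix + wstar = wfix :=
  stmt8_general ℓ h2
end

section
/- For every r ∈ (0,1), every K > 0 and every λ > 1 there exist λ₀ > 1 and δ > 0 with the following property. Let Z be any Banach space, and equip V = ℝ × ℝ⁴ × Z with the norm ‖(x,y,z)‖ = |x| + ‖y‖ + ‖z‖. For ρ, σ > 0 define the cone C_{ρ,σ} = {(x,y,z) ∈ V : ‖y‖ ≤ ρ|x| and ‖z‖ ≤ σ|x|}, and in ℝ⁵ = ℝ × ℝ⁴ define C_ρ = {(x,y) : ‖y‖ ≤ ρ|x|} with norm |x| + ‖y‖. Let T : V → V be a bounded linear operator of block form T(x,y,z) = (A(x,y) + B z, C(x,y) + D z) with A : ℝ⁵ → ℝ⁵, B : Z → ℝ⁵, C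 : ℝ⁵ → Z, D : Z → Z, such that: A maps C_r into C_{r/3}; ‖A v‖ ≥ λ₀‖v‖ for all v ∈ C_r; and ‖B‖, ‖C‖, ‖D‖ ≤ K. Then T maps C_{r,δ} into C_{r/2, δ/2}, and ‖T v‖ ≥ λ·‖v‖ for every v ∈ C_{r,δ}. -/
/-!
Write `u = |x|` for `v = ((x, y), z)` in `C_{r,1}`, so that `‖y‖, ‖z‖ ≤ u`. The coupling terms
`B z` and `C (x, y) + D z` then have size `O(K u)`. On the other hand `A (x, y) ∈ C_{r/3}` carries at
least three quarters of its norm in its first coordinate, and that norm is at least `λ₀ u`. Once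
`λ₀ ≫ K / r`, adding `B z` moves the first coordinate and the `ℝ⁴`-part of `A (x, y)` only by a small
fraction of `|A (x, y)₁|`, which gives the cone invariance with `δ = 1`; expansion follows from the
reverse triangle inequality.
-/

section Cone

variable {Y : Type*} [SeminormedAddCommGroup Y]

def cone (ρ : ℝ) : Set (ℝ × Y) := {p | ‖p.2‖ ≤ ρ * |p.1|}

theorem cone_mono {ρ ρ' : ℝ} (h : ρ ≤ ρ') : (cone ρ : Set (ℝ × Y)) ⊆ cone ρ' :=
  fun p (hp : ‖p.2‖ ≤ ρ * |p.1|) => hp.trans (mul_le_mul_of_nonneg_right h (abs_nonneg _))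

theorem abs_fst_add_norm_snd_le_of_mem_cone {ρ : ℝ} {p : ℝ × Y} (hp : p ∈ cone ρ) :
    |p.1| + ‖p.2‖ ≤ (1 + ρ) * |p.1| := by
  have : ‖p.2‖ ≤ ρ * |p.1| := hp
  linarith

theorem abs_fst_sub_le_abs_fst_add (a b : ℝ × Y) :
    |a.1| - (|b.1| + ‖b.2‖) ≤ |(a + b).1| := by
  have := abs_sub_abs_le_abs_sub a.1 (-b.1)
  rw [abs_neg, sub_neg_eq_add] at this
  change _ ≤ |a.1 + b.1|
  linarith [norm_nonneg b.2]

theorem norm_snd_add_le (a b : ℝ × Y) : ‖(a + b).2‖ ≤ ‖a.2‖ + (|b.1| + ‖b.2‖) := by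
  change ‖a.2 + b.2‖ ≤ _
  linarith [norm_add_le a.2 b.2, abs_nonneg b.1]

theorem abs_fst_add_norm_snd_sub_le (a b : ℝ × Y) :
    |a.1| + ‖a.2‖ - (|b.1| + ‖b.2‖) ≤ |(a + b).1| + ‖(a + b).2‖ := by
  have h1 := abs_sub_abs_le_abs_sub a.1 (-b.1)
  have h2 := norm_sub_norm_le a.2 (-b.2)
  rw [abs_neg, sub_neg_eq_add] at h1
  rw [norm_neg, sub_neg_eq_add] at h2
  change _ ≤ |a.1 + b.1| + ‖a.2 + b.2‖
  linarith

theorem add_mem_cone_half {r : ℝ} (hr0 : 0 ≤ r) (hr1 : r ≤ 1) {a b : ℝ × Y}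
    (ha : a ∈ cone (r / 3)) (hb : 9 * (|b.1| + ‖b.2‖) ≤ r * |a.1|) : a + b ∈ cone (r / 2) := by
  have ha : ‖a.2‖ ≤ r / 3 * |a.1| := ha
  have hrb : r * (|b.1| + ‖b.2‖) ≤ |b.1| + ‖b.2‖ :=
    mul_le_of_le_one_left (by positivity) hr1
  have hfst :=
    mul_le_mul_of_nonneg_left (abs_fst_sub_le_abs_fst_add a b) (by positivity : 0 ≤ r / 2)
  show ‖(a + b).2‖ ≤ r / 2 * |(a + b).1|
  linarith [norm_snd_add_le a b]

theorem three_mul_abs_fst_le_of_expanding {c : ℝ} (hc : 0 ≤ c) {p a : ℝ × Y}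
    (ha : a ∈ cone (1 / 3)) (hexp : c * (|p.1| + ‖p.2‖) ≤ |a.1| + ‖a.2‖) :
    3 * c * |p.1| ≤ 4 * |a.1| := by
  have hp : c * |p.1| ≤ c * (|p.1| + ‖p.2‖) := by
    gcongr; exact le_add_of_nonneg_right (norm_nonneg _)
  linarith [abs_fst_add_norm_snd_le_of_mem_cone ha]

end Cone

theorem stmt13 (r K lam : ℝ) (hr : r ∈ Set.Ioo (0:ℝ) 1) (hK : 0 < K) (hlam : 1 < lam) :
    ∃ lam0 δ : ℝ, 1 < lam0 ∧ 0 < δ ∧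
      ∀ (Z : Type) [inst1 : NormedAddCommGroup Z] [inst2 : NormedSpace ℝ Z],
      ∀ (A : (ℝ × (Fin 4 → ℝ)) →ₗ[ℝ] ℝ × (Fin 4 → ℝ))
        (B : Z →ₗ[ℝ] ℝ × (Fin 4 → ℝ))
        (C : (ℝ × (Fin 4 → ℝ)) →ₗ[ℝ] Z)
        (D : Z →ₗ[ℝ] Z),
        -- A maps the cone C_r into the cone C_{r/3}
        (∀ p : ℝ × (Fin 4 → ℝ), ‖p.2‖ ≤ r * |p.1| → ‖(A p).2‖ ≤ r / 3 * |(A p).1|) →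
        -- A expands vectors of the cone C_r by a factor λ₀
        (∀ p : ℝ × (Fin 4 → ℝ), ‖p.2‖ ≤ r * |p.1| →
          lam0 * (|p.1| + ‖p.2‖) ≤ |(A p).1| + ‖(A p).2‖) →
        -- the blocks B, C, D are bounded by K
        (∀ z : Z, |(B z).1| + ‖(B z).2‖ ≤ K * ‖z‖) →
        (∀ p : ℝ × (Fin 4 → ℝ), ‖C p‖ ≤ K * (|p.1| + ‖p.2‖)) →
        (∀ z : Z, ‖D z‖ ≤ K * ‖z‖) →
        -- then T(x,y,z) = (A(x,y) + Bz, C(x,y) + Dz) maps C_{r,δ} into C_{r/2,δ/2}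
        -- and expands vectors of C_{r,δ} by a factor λ
        ∀ v : (ℝ × (Fin 4 → ℝ)) × Z,
          ‖v.1.2‖ ≤ r * |v.1.1| → ‖v.2‖ ≤ δ * |v.1.1| →
          (‖(A v.1 + B v.2).2‖ ≤ r / 2 * |(A v.1 + B v.2).1| ∧
            ‖C v.1 + D v.2‖ ≤ δ / 2 * |(A v.1 + B v.2).1| ∧
            lam * (|v.1.1| + ‖v.1.2‖ + ‖v.2‖) ≤
              |(A v.1 + B v.2).1| + ‖(A v.1 + B v.2).2‖ + ‖C v.1 + D v.2‖) := by
  obtain ⟨hr0, hr1⟩ := hr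
  obtain ⟨c, hc_lam, hc_r⟩ : ∃ c, 2 * lam + K ≤ c ∧ 12 * K ≤ r * c :=
    ⟨2 * lam + K + 12 * K / r, by linarith [show 0 < 12 * K / r by positivity], by
      rw [mul_add, mul_div_cancel₀ _ hr0.ne']; linarith [mul_pos hr0 (by linarith : 0 < 2 * lam + K)]⟩
  refine ⟨c, 1, by linarith, one_pos, ?_⟩
  intro Z _ _ A B C D hAcone hAexp hB hC hD ⟨p, z⟩ (hp : p ∈ cone r) hz
  simp only [one_mul] at hz ⊢
  have hu : 0 ≤ |p.1| := abs_nonneg _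
  have hp1 := abs_fst_add_norm_snd_le_of_mem_cone hp
  have hBz : |(B z).1| + ‖(B z).2‖ ≤ K * |p.1| := (hB z).trans (by gcongr)
  have hCDz : ‖C p + D z‖ ≤ 3 * K * |p.1| := by
    have hCp : ‖C p‖ ≤ K * (2 * |p.1|) :=
      (hC p).trans (by gcongr; linarith [mul_le_of_le_one_left hu hr1.le])
    linarith [norm_add_le (C p) (D z), (hD z).trans (by gcongr : K * ‖z‖ ≤ K * |p.1|)]
  have hAp := three_mul_abs_fst_le_of_expanding (by linarith)
    (cone_mono (by linarith) (hAcone p hp)) (hAexp p hp)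
  have hfst : 9 * K * |p.1| ≤ r * |(A p).1| := by
    linarith [mul_le_mul_of_nonneg_left hAp hr0.le, mul_le_mul_of_nonneg_right hc_r hu]
  refine ⟨add_mem_cone_half hr0.le hr1.le (hAcone p hp) (by linarith), ?_, ?_⟩
  · linarith [abs_fst_sub_le_abs_fst_add (A p) (B z),
      mul_le_of_le_one_left (abs_nonneg (A p).1) hr1.le, mul_nonneg hK.le hu]
  · calc lam * (|p.1| + ‖p.2‖ + ‖z‖)
        ≤ c * (|p.1| + ‖p.2‖) - K * |p.1| := by
          have hlam0 : 0 ≤ lam := by linarith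
          linarith [mul_le_mul_of_nonneg_right hc_lam (add_nonneg hu (norm_nonneg p.2)),
            mul_le_mul_of_nonneg_left hz hlam0, mul_nonneg hlam0 (norm_nonneg p.2),
            mul_nonneg hK.le (norm_nonneg p.2)]
      _ ≤ |(A p).1| + ‖(A p).2‖ - (|(B z).1| + ‖(B z).2‖) := by linarith [hAexp p hp]
      _ ≤ _ := by linarith [abs_fst_add_norm_snd_sub_le (A p) (B z), norm_nonneg (C p + D z)]
end
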